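/- Let f : Z_2^n → Z_2 be balanced of the form f = (h | h ⊕ g) where g(x) = x_1 ⊕ ⋯ ⊕ x_{n-1} ⊕ b and h : Z_2^{n-1} → Z_2 has at least p ≥ 1 nonzero linear structures of even Hamming weight. Then σ_f ≥ 2^{2n}(1 + p). -/
import Mathlib


open Finset

/-- `(-1)^{f(x)}` as an integer, for functions on `Z_2^{m} × Z_2 ≅ Z_2^{m+1}`
(the second coordinate is the most significant bit). -/
def bhatP {m : ℕ} (f : (Fin m → ZMod 2) × ZMod 2 → ZMod 2)
    (x : (Fin m → ZMod 2) × ZMod 2) : ℤ :=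
  (-1) ^ (f x).val

/-- Autocorrelation `Δ_f(α)`. -/
def autocorrP {m : ℕ} (f : (Fin m → ZMod 2) × ZMod 2 → ZMod 2)
    (a : (Fin m → ZMod 2) × ZMod 2) : ℤ :=
  ∑ x : (Fin m → ZMod 2) × ZMod 2, bhatP f x * bhatP f (x + a)

/-- Hamming weight. -/
def wt {m : ℕ} (x' : Fin m → ZMod 2) : ℕ :=
  (Finset.univ.filter fun i => x' i = 1).card

/-- Sum-of-squares indicator `σ_f`. -/
def sosP {m : ℕ} (f : (Fin m → ZMod 2) × ZMod 2 → ZMod 2) : ℤ :=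
  ∑ a : (Fin m → ZMod 2) × ZMod 2, (autocorrP f a) ^ 2

lemma zmod2_neg_one_pow_add (u v : ZMod 2) :
    ((-1:ℤ)) ^ u.val * (-1) ^ v.val = (-1) ^ (u+v).val := by
  revert u v; decide

lemma sum_eq_wt {m : ℕ} (x' : Fin m → ZMod 2) :
    (∑ i, x' i) = (wt x' : ZMod 2) := by
  unfold wt
  have h1 : ∀ v : ZMod 2, v = if v = 1 then 1 else 0 := by decide
  calc (∑ i, x' i) = ∑ i, (if x' i = 1 then (1:ZMod 2) else 0) :=
        Finset.sum_congr rfl fun i _ => h1 (x' i)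
    _ = ((Finset.univ.filter fun i => x' i = 1).card : ZMod 2) := by
        rw [Finset.sum_boole]

lemma even_cast_zmod2 {n : ℕ} (hn : Even n) : (n : ZMod 2) = 0 := by
  obtain ⟨k, rfl⟩ := hn
  push_cast
  have h2 : (k : ZMod 2) + k = 2 * k := by ring
  rw [h2]
  have : (2 : ZMod 2) = 0 := rfl
  rw [this, zero_mul]

lemma neg_one_pow_sq (n : ℕ) : ((-1:ℤ) ^ n) ^ 2 = 1 := by
  rw [← pow_mul, mul_comm, pow_mul, neg_one_sq, one_pow]

theorem sos_lower_bound_linear_structures {m : ℕ} (hm : 2 ≤ m)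
    (h : (Fin m → ZMod 2) → ZMod 2) (b : ZMod 2)
    (f : (Fin m → ZMod 2) × ZMod 2 → ZMod 2)
    (hf : ∀ (x' : Fin m → ZMod 2) (ε : ZMod 2),
      f (x', ε) = h x' + ε * ((∑ i, x' i) + b))
    (hbal : (Finset.univ.filter fun x => f x = 1).card = 2 ^ m)
    (S : Finset (Fin m → ZMod 2)) (p : ℕ) (hp : S.card = p) (hp1 : 1 ≤ p)
    (hS : ∀ x' ∈ S, x' ≠ 0 ∧ (∃ c : ZMod 2, ∀ y', h y' + h (y' + x') = c) ∧
      Even (wt x')) :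
    2 ^ (2 * (m + 1)) * (1 + (p : ℤ)) ≤ sosP f := by
  classical
  have hcard : (Fintype.card ((Fin m → ZMod 2) × ZMod 2) : ℤ) = 2 ^ (m+1) := by
    simp [Fintype.card_prod, Fintype.card_fun]
    ring
  -- value at zero
  have hzero : (autocorrP f 0) ^ 2 = 2 ^ (2*(m+1)) := by
    have : autocorrP f 0 = 2 ^ (m+1) := by
      unfold autocorrP
      have ht : ∀ x : (Fin m → ZMod 2) × ZMod 2,
          bhatP f x * bhatP f (x + 0) = 1 := by
        intro x
        rw [add_zero, bhatP, zmod2_neg_one_pow_add]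
        have : f x + f x = 0 := by
          generalize f x = u; revert u; decide
        rw [this]; rfl
      rw [Finset.sum_congr rfl fun x _ => ht x, Finset.sum_const, card_univ,
        nsmul_eq_mul, mul_one]
      exact hcard
    rw [this, ← pow_mul]; ring_nf
  -- value on S × {0}
  have hSval : ∀ a' ∈ S, (autocorrP f (a', 0)) ^ 2 = 2 ^ (2*(m+1)) := by
    intro a' ha'
    obtain ⟨hne, ⟨c, hc⟩, hev⟩ := hS a' ha'
    have hL0 : (∑ i, a' i) = 0 := by
      rw [sum_eq_wt]; exact even_cast_zmod2 hev
    have ht : ∀ x : (Fin m → ZMod 2) × ZMod 2,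
        bhatP f x * bhatP f (x + (a', 0)) = (-1) ^ c.val := by
      rintro ⟨y, ε⟩
      have hx : ((y, ε) : (Fin m → ZMod 2) × ZMod 2) + (a', (0:ZMod 2)) = (y + a', ε) := by
        simp [Prod.ext_iff]
      rw [hx, bhatP, bhatP, zmod2_neg_one_pow_add]
      congr 1
      rw [hf, hf]
      have hsum : (∑ i, (y + a') i) = (∑ i, y i) + ∑ i, a' i := by
        simp [Finset.sum_add_distrib]
      rw [hsum, hL0, add_zero]
      have hcy := hc y
      have hcancel : ∀ e x y : ZMod 2, x + e + (y + e) = x + y := by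
        intro e x y; revert e x y; decide
      rw [hcancel (ε * ((∑ i, y i) + b)) (h y) (h (y + a')), hcy]
    have hval : autocorrP f (a', 0) = 2 ^ (m+1) * (-1) ^ c.val := by
      unfold autocorrP
      rw [Finset.sum_congr rfl fun x _ => ht x, Finset.sum_const, card_univ,
        nsmul_eq_mul, hcard]
    rw [hval, mul_pow, neg_one_pow_sq, mul_one, ← pow_mul]; ring_nf
  -- the finite set of good points
  set T : Finset ((Fin m → ZMod 2) × ZMod 2) :=
    insert 0 (S.image fun x' => (x', (0:ZMod 2))) with hT
  have hinj : Set.InjOn (fun x' : Fin m → ZMod 2 => (x', (0:ZMod 2))) S := by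
    intro x _ y _ hxy
    exact (Prod.mk.injEq _ _ _ _ ▸ hxy).1
  have h0notin : (0 : (Fin m → ZMod 2) × ZMod 2) ∉ S.image fun x' => (x', (0:ZMod 2)) := by
    intro h0
    obtain ⟨x', hx', hx0⟩ := Finset.mem_image.mp h0
    exact (hS x' hx').1 (congrArg Prod.fst hx0)
  have hsumT : ∑ a ∈ T, (autocorrP f a) ^ 2 = 2 ^ (2*(m+1)) * (1 + (p:ℤ)) := by
    rw [hT, Finset.sum_insert h0notin, Finset.sum_image (fun x hx y hy => hinj hx hy),
      hzero]
    have : ∑ x' ∈ S, (autocorrP f (x', (0:ZMod 2))) ^ 2 = ∑ x' ∈ S, (2:ℤ) ^ (2*(m+1)) :=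
      Finset.sum_congr rfl fun x' hx' => hSval x' hx'
    rw [this, Finset.sum_const, hp, nsmul_eq_mul]
    ring
  calc 2 ^ (2 * (m + 1)) * (1 + (p : ℤ)) = ∑ a ∈ T, (autocorrP f a) ^ 2 := hsumT.symm
    _ ≤ sosP f := by
        unfold sosP
        exact Finset.sum_le_sum_of_subset_of_nonneg (Finset.subset_univ T)
          (fun a _ _ => sq_nonneg _)
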